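/- Let D := {(v₁,v₂,v₃,w₁,w₂,w₃) ∈ ℝ⁶ : v₁+v₂+v₃ = 1, w₁+w₂+w₃ = 1, v₁w₁ − v₂w₂ + v₃w₃ = 0, and v₁,v₂,v₃,w₁,w₂,w₃ ≥ 0}. Then the subset of D consisting of points for which at least one of the six coordinates v₁,v₂,v₃,w₁,w₂,w₃ equals 0 is homeomorphic to a 2-dimensional sphere. -/

import Mathlib

/-!
In the coordinates `p = 1 - v₁`, `q = 1 - w₃`, `r = 1 - v₃`, `s = 1 - w₁` the incidence relation
becomes `pq + rs = 1`, and two numbers in `[0, 1]` are determined by their difference and their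
product. Hence `x ↦ (p - q, r - s, pq)` maps `D` continuously and bijectively onto the tetrahedron
with vertices `(±1, 0, 0)`, `(0, ±1, 1)`, and a point of `D` has a vanishing coordinate exactly
when its image lies on a face. As `D` is compact, the boundary of `D` is therefore homeomorphic to
the boundary of the tetrahedron, which, as the frontier of a convex body, is homeomorphic to the
unit sphere.
-/

/-- The realization in `ℝ⁶` of the totally nonnegative part of the complete flag variety
of `SL₃(ℝ)`: points `(v₁, v₂, v₃, w₁, w₂, w₃)` with `v₁ + v₂ + v₃ = 1`,
`w₁ + w₂ + w₃ = 1`, `v₁w₁ - v₂w₂ + v₃w₃ = 0`, and all coordinates nonnegative. -/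
def tnnFlag : Set (EuclideanSpace ℝ (Fin 6)) :=
  {x | x 0 + x 1 + x 2 = 1 ∧ x 3 + x 4 + x 5 = 1 ∧
    x 0 * x 3 - x 1 * x 4 + x 2 * x 5 = 0 ∧ ∀ i, 0 ≤ x i}

open Set Bornology Metric

section Polyhedron

variable {E : Type*} [AddCommGroup E] [TopologicalSpace E] [ContinuousAdd E] [Module ℝ E]
  [ContinuousSMul ℝ E]

theorem interior_setOf_le_of_ne_zero {f : StrongDual ℝ E} (hf : f ≠ 0) (c : ℝ) :
    interior {y | f y ≤ c} = {y | f y < c} := by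
  change interior (f ⁻¹' Iic c) = f ⁻¹' Iio c
  rw [← (f.isOpenMap_of_ne_zero hf).preimage_interior_eq_interior_preimage f.continuous,
    interior_Iic]

variable {ι : Type*} {ℓ : ι → StrongDual ℝ E}

theorem interior_setOf_forall_le [Finite ι] (hℓ : ∀ i, ℓ i ≠ 0) (c : ι → ℝ) :
    interior {y | ∀ i, ℓ i y ≤ c i} = {y | ∀ i, ℓ i y < c i} := by
  simp only [ofPred_forall, interior_iInter_of_finite, interior_setOf_le_of_ne_zero (hℓ _)]

theorem frontier_setOf_forall_le [Finite ι] (hℓ : ∀ i, ℓ i ≠ 0) (c : ι → ℝ) :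
    frontier {y | ∀ i, ℓ i y ≤ c i} = {y | (∀ i, ℓ i y ≤ c i) ∧ ∃ i, ℓ i y = c i} := by
  have hclosed : IsClosed {y | ∀ i, ℓ i y ≤ c i} := by
    simp only [ofPred_forall]
    exact isClosed_iInter fun i => isClosed_le (ℓ i).continuous continuous_const
  rw [hclosed.frontier_eq, interior_setOf_forall_le hℓ]
  ext y
  simp only [mem_sdiff, mem_ofPred_eq, not_forall, not_lt, and_congr_right_iff]
  exact fun hy => exists_congr fun i => (hy i).ge_iff_eq

end Polyhedron

theorem EuclideanSpace.isBounded_of_forall_apply_mem_Icc {ι : Type*} [Fintype ι]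
    {s : Set (EuclideanSpace ℝ ι)} {a b : ℝ} (h : ∀ y ∈ s, ∀ i, y i ∈ Icc a b) : IsBounded s :=
  ((PiLp.antilipschitzWith_ofLp 2 _).isBounded_preimage
    (Metric.isBounded_Icc (fun _ => a) (fun _ => b))).subset
    fun y hy => ⟨fun i => (h y hy i).1, fun i => (h y hy i).2⟩

theorem Set.BijOn.sep {α β : Type*} {f : α → β} {s : Set α} {t : Set β} {p : α → Prop}
    {q : β → Prop} (h : BijOn f s t) (hpq : ∀ x ∈ s, q (f x) ↔ p x) :
    BijOn f {x ∈ s | p x} {y ∈ t | q y} := by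
  refine ⟨fun x hx => ⟨h.mapsTo hx.1, (hpq x hx.1).2 hx.2⟩, h.injOn.mono fun x hx => hx.1, ?_⟩
  rintro y ⟨hy, hqy⟩
  obtain ⟨x, hx, rfl⟩ := h.surjOn hy
  exact ⟨x, ⟨hx, (hpq x hx).1 hqy⟩, rfl⟩

theorem Set.BijOn.nonempty_homeomorph_of_isCompact {X Y : Type*} [TopologicalSpace X]
    [TopologicalSpace Y] [T2Space Y] {f : X → Y} {s : Set X} {t : Set Y} (h : BijOn f s t)
    (hf : Continuous f) (hs : IsCompact s) : Nonempty (s ≃ₜ t) := by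
  have := isCompact_iff_compactSpace.mp hs
  exact ⟨Continuous.homeoOfEquivCompactToT2 (f := h.equiv f)
    ((hf.comp continuous_subtype_val).subtype_mk _)⟩

theorem Convex.nonempty_frontier_homeomorph_sphere {E : Type*} [NormedAddCommGroup E]
    [NormedSpace ℝ E] {s : Set E} (hc : Convex ℝ s) (hne : (interior s).Nonempty)
    (hb : IsBounded s) : Nonempty (frontier s ≃ₜ sphere (0 : E) 1) := by
  obtain ⟨e, -, -, he⟩ := exists_homeomorph_image_interior_closure_frontier_eq_unitBall hc hne hb
  exact ⟨(e.image _).trans (Homeomorph.setCongr he)⟩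

theorem eq_and_eq_of_sub_eq_of_mul_eq {a b c d : ℝ} (ha : 0 ≤ a) (hb : 0 ≤ b) (hc : 0 ≤ c)
    (hd : 0 ≤ d) (hsub : a - b = c - d) (hmul : a * b = c * d) : a = c ∧ b = d := by
  have hsq : (a + b) ^ 2 = (c + d) ^ 2 := by
    linear_combination (a - b + c - d) * hsub + 4 * hmul
  have hsum := (pow_left_inj₀ (by positivity) (by positivity) two_ne_zero).1 hsq
  constructor <;> linarith

theorem exists_sub_eq_mul_eq {d m : ℝ} (hm : 0 ≤ m) (h₁ : m + d ≤ 1) (h₂ : m - d ≤ 1) :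
    ∃ a b : ℝ, 0 ≤ a ∧ a ≤ 1 ∧ 0 ≤ b ∧ b ≤ 1 ∧ a - b = d ∧ a * b = m := by
  -- `a` and `-b` are the roots of `t ^ 2 - d * t - m`
  set S := √(d ^ 2 + 4 * m)
  have hS : S ^ 2 = d ^ 2 + 4 * m := Real.sq_sqrt (by positivity)
  have hdS : |d| ≤ S := Real.abs_le_sqrt (by linarith)
  have hS₁ : S ≤ 2 - d := (Real.sqrt_le_left (by linarith [abs_le.1 hdS])).2 (by nlinarith)
  have hS₂ : S ≤ 2 + d := (Real.sqrt_le_left (by linarith [abs_le.1 hdS])).2 (by nlinarith)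
  refine ⟨(S + d) / 2, (S - d) / 2, ?_, ?_, ?_, ?_, ?_, ?_⟩ <;> linarith [abs_le.1 hdS]

section
variable {x : EuclideanSpace ℝ (Fin 6)}

theorem apply_le_one_of_mem_tnnFlag (hx : x ∈ tnnFlag) (i : Fin 6) : x i ≤ 1 := by
  obtain ⟨hv, hw, -, h0⟩ := hx
  fin_cases i <;> simp <;> linarith [h0 0, h0 1, h0 2, h0 3, h0 4, h0 5]

theorem incidence_of_mem_tnnFlag (hx : x ∈ tnnFlag) :
    (1 - x 0) * (1 - x 5) + (1 - x 2) * (1 - x 3) = 1 := by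
  obtain ⟨hv, hw, hvw, -⟩ := hx
  linear_combination -hvw - x 4 * hv - (1 - x 0 - x 2) * hw

theorem exists_apply_eq_zero_iff_of_mem_tnnFlag (hx : x ∈ tnnFlag) :
    (∃ i, x i = 0) ↔ x 0 = 0 ∨ x 5 = 0 ∨ x 2 = 0 ∨ x 3 = 0 := by
  obtain ⟨-, -, hvw, h0⟩ := hx
  have hmid : x 1 * x 4 = 0 → x 0 = 0 ∨ x 3 = 0 := fun h => by
    have := mul_nonneg (h0 2) (h0 5)
    have := mul_nonneg (h0 0) (h0 3)
    exact mul_eq_zero.1 (by nlinarith)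
  constructor
  · rintro ⟨i, hi⟩
    fin_cases i
    · exact Or.inl hi
    · rcases hmid (by simp_all) with h | h <;> simp [h]
    · simp_all
    · simp_all
    · rcases hmid (by simp_all) with h | h <;> simp [h]
    · simp_all
  · rintro (h | h | h | h) <;> exact ⟨_, h⟩

theorem isClosed_tnnFlag : IsClosed tnnFlag := by
  simp only [tnnFlag, ofPred_and, ofPred_forall]
  exact (isClosed_eq (by fun_prop) (by fun_prop)).inter <|
    (isClosed_eq (by fun_prop) (by fun_prop)).inter <|
    (isClosed_eq (by fun_prop) (by fun_prop)).inter <|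
    isClosed_iInter fun i => isClosed_le (by fun_prop) (by fun_prop)

theorem isCompact_tnnFlag : IsCompact tnnFlag :=
  isCompact_of_isClosed_isBounded isClosed_tnnFlag <|
    EuclideanSpace.isBounded_of_forall_apply_mem_Icc (a := 0) (b := 1) fun _ hx i =>
      ⟨hx.2.2.2 i, apply_le_one_of_mem_tnnFlag hx i⟩

end

open EuclideanSpace in
noncomputable def tetraFace : Fin 4 → StrongDual ℝ (EuclideanSpace ℝ (Fin 3)) :=
  ![proj 0 + proj 2, proj 2 - proj 0, proj 1 - proj 2, -proj 1 - proj 2]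

def tetraLevel : Fin 4 → ℝ := ![1, 1, 0, 0]

def tetrahedron : Set (EuclideanSpace ℝ (Fin 3)) := {y | ∀ i, tetraFace i y ≤ tetraLevel i}

theorem mem_tetrahedron {y : EuclideanSpace ℝ (Fin 3)} : y ∈ tetrahedron ↔
    y 0 + y 2 ≤ 1 ∧ y 2 - y 0 ≤ 1 ∧ y 1 - y 2 ≤ 0 ∧ -y 1 - y 2 ≤ 0 := by
  simp [tetrahedron, Fin.forall_fin_succ, tetraFace, tetraLevel]

theorem tetraFace_ne_zero (i : Fin 4) : tetraFace i ≠ 0 :=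
  DFunLike.ne_iff.2 ⟨EuclideanSpace.single 2 1, by fin_cases i <;> simp [tetraFace]⟩

theorem interior_tetrahedron_nonempty : (interior tetrahedron).Nonempty := by
  refine ⟨EuclideanSpace.single 2 (1 / 2), ?_⟩
  rw [tetrahedron, interior_setOf_forall_le tetraFace_ne_zero]
  intro i
  fin_cases i <;> norm_num [tetraFace, tetraLevel, Fin.ext_iff]

theorem isBounded_tetrahedron : IsBounded tetrahedron :=
  EuclideanSpace.isBounded_of_forall_apply_mem_Icc (a := -1) (b := 1) fun y hy i => by
    rw [mem_tetrahedron] at hy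
    fin_cases i <;> constructor <;> simp <;> linarith

theorem frontier_tetrahedron :
    frontier tetrahedron = {y ∈ tetrahedron | ∃ j, tetraFace j y = tetraLevel j} :=
  frontier_setOf_forall_le tetraFace_ne_zero tetraLevel

theorem convex_tetrahedron : Convex ℝ tetrahedron := by
  simp only [tetrahedron, ofPred_forall]
  exact convex_iInter fun i => convex_halfSpace_le (tetraFace i).isLinear _

noncomputable def flagToTetra (x : EuclideanSpace ℝ (Fin 6)) : EuclideanSpace ℝ (Fin 3) :=
  !₂[x 5 - x 0, x 3 - x 2, (1 - x 0) * (1 - x 5)]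

theorem continuous_flagToTetra : Continuous flagToTetra := by
  unfold flagToTetra; fun_prop

section
variable {x : EuclideanSpace ℝ (Fin 6)}

theorem tetraLevel_sub_tetraFace_flagToTetra (hx : x ∈ tnnFlag) (j : Fin 4) :
    tetraLevel j - tetraFace j (flagToTetra x) =
      x (![0, 5, 2, 3] j) * (2 - x (![5, 0, 3, 2] j)) := by
  have h := incidence_of_mem_tnnFlag hx
  fin_cases j <;>
    simp only [tetraLevel, tetraFace, flagToTetra, Matrix.cons_val, Matrix.cons_val_zero,
      Matrix.cons_val_one, Fin.zero_eta, Fin.mk_one, Fin.reduceFinMk, add_apply, sub_apply,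
      neg_apply, PiLp.proj_apply]
  · ring
  · ring
  · linear_combination h
  · linear_combination h

theorem mapsTo_flagToTetra : MapsTo flagToTetra tnnFlag tetrahedron := fun x hx j => by
  have h := tetraLevel_sub_tetraFace_flagToTetra hx j
  have := mul_nonneg (hx.2.2.2 (![0, 5, 2, 3] j))
    (sub_nonneg.2 ((apply_le_one_of_mem_tnnFlag hx (![5, 0, 3, 2] j)).trans one_le_two))
  linarith

theorem exists_tetraFace_flagToTetra_eq_iff (hx : x ∈ tnnFlag) :
    (∃ j, tetraFace j (flagToTetra x) = tetraLevel j) ↔ ∃ i, x i = 0 := by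
  have hpos (i : Fin 6) : 2 - x i ≠ 0 := by linarith [apply_le_one_of_mem_tnnFlag hx i]
  simp only [← sub_eq_zero (a := tetraLevel _), eq_comm (a := tetraFace _ _),
    tetraLevel_sub_tetraFace_flagToTetra hx, mul_eq_zero, hpos, or_false,
    exists_apply_eq_zero_iff_of_mem_tnnFlag hx, Fin.exists_fin_succ]
  simp

theorem injOn_flagToTetra : InjOn flagToTetra tnnFlag := by
  intro x hx x' hx' h
  have h0 := congrArg (· 0) h
  have h1 := congrArg (· 1) h
  have h2 := congrArg (· 2) h
  simp only [flagToTetra, Matrix.cons_val_zero, Matrix.cons_val_one, Matrix.cons_val] at h0 h1 h2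
  have hx1 i : 0 ≤ 1 - x i := sub_nonneg.2 (apply_le_one_of_mem_tnnFlag hx i)
  have hx1' i : 0 ≤ 1 - x' i := sub_nonneg.2 (apply_le_one_of_mem_tnnFlag hx' i)
  obtain ⟨e0, e5⟩ := eq_and_eq_of_sub_eq_of_mul_eq (hx1 0) (hx1 5) (hx1' 0) (hx1' 5)
    (by linarith) h2
  obtain ⟨e2, e3⟩ := eq_and_eq_of_sub_eq_of_mul_eq (hx1 2) (hx1 3) (hx1' 2) (hx1' 3)
    (by linarith) (by linarith [incidence_of_mem_tnnFlag hx, incidence_of_mem_tnnFlag hx'])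
  obtain ⟨hv, hw, -, -⟩ := hx
  obtain ⟨hv', hw', -, -⟩ := hx'
  ext i
  fin_cases i <;> simp <;> linarith

theorem surjOn_flagToTetra : SurjOn flagToTetra tnnFlag tetrahedron := by
  intro y hy
  obtain ⟨h₁, h₂, h₃, h₄⟩ := mem_tetrahedron.1 hy
  obtain ⟨p, q, hp₀, hp₁, hq₀, hq₁, hpq_sub, hpq_mul⟩ :=
    exists_sub_eq_mul_eq (d := y 0) (m := y 2) (by linarith) (by linarith) (by linarith)
  obtain ⟨r, s, hr₀, hr₁, hs₀, hs₁, hrs_sub, hrs_mul⟩ :=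
    exists_sub_eq_mul_eq (d := y 1) (m := 1 - y 2) (by linarith) (by linarith) (by linarith)
  have hv₂ : 0 ≤ p + r - 1 := by
    linarith [mul_le_of_le_one_right hp₀ hq₁, mul_le_of_le_one_right hr₀ hs₁]
  have hw₂ : 0 ≤ q + s - 1 := by
    linarith [mul_le_of_le_one_left hq₀ hp₁, mul_le_of_le_one_left hs₀ hr₁]
  refine ⟨!₂[1 - p, p + r - 1, 1 - r, 1 - s, q + s - 1, 1 - q], ⟨?_, ?_, ?_, fun i => ?_⟩, ?_⟩
  · simp
  · simp
  · simp only [Matrix.cons_val_zero, Matrix.cons_val, Matrix.cons_val_one]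
    linear_combination -hpq_mul - hrs_mul
  · fin_cases i <;> simp <;> linarith
  · ext i; fin_cases i <;> simp [flagToTetra] <;> linarith

end

theorem bijOn_flagToTetra : BijOn flagToTetra tnnFlag tetrahedron :=
  ⟨mapsTo_flagToTetra, injOn_flagToTetra, surjOn_flagToTetra⟩

theorem tnnFlag_boundary_homeomorphic_sphere :
    Nonempty (↥{x ∈ tnnFlag | ∃ i, x i = 0} ≃ₜ
      Metric.sphere (0 : EuclideanSpace ℝ (Fin 3)) 1) := by
  have hbij : BijOn flagToTetra {x ∈ tnnFlag | ∃ i, x i = 0} (frontier tetrahedron) := by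
    rw [frontier_tetrahedron]
    exact bijOn_flagToTetra.sep fun x hx => exists_tetraFace_flagToTetra_eq_iff hx
  have hclosed : IsClosed {x : EuclideanSpace ℝ (Fin 6) | ∃ i, x i = 0} := by
    simp only [ofPred_exists]
    exact isClosed_iUnion_of_finite fun i => isClosed_eq (by fun_prop) continuous_const
  obtain ⟨f⟩ := hbij.nonempty_homeomorph_of_isCompact continuous_flagToTetra
    (isCompact_tnnFlag.inter_right hclosed)
  obtain ⟨g⟩ := convex_tetrahedron.nonempty_frontier_homeomorph_sphere
    interior_tetrahedron_nonempty isBounded_tetrahedron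
  exact ⟨f.trans g⟩
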